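/- arXiv:2103.08655 — 2 statements merged into one kernel-verified Lean document; each statement's English description precedes it below -/
import Mathlib

section
/- The category of pastures has all limits of diagrams indexed by a small category: for every small category J and every functor F from J to the category of pastures, a limit of F exists. -/
universe u v w

/-- A pasture structure on a type `P`: a multiplication, a zero, a one,
an involution `neg`, and a ternary nullset relation `null a b c`
(meaning "`a + b + c = 0`"). -/
structure PastureStr (P : Type u) where
  mul : P → P → P
  zero : P
  one : P
  neg : P → P
  null : P → P → P → Prop

/-- `P` together with a `PastureStr` is a pasture: `P` is a commutative
monoid with zero whose nonzero elements form an abelian group, `neg` is an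
involution fixing `0`, and the nullset is invariant under permutations,
invariant under multiplication, and satisfies `a + b + 0 = 0 ↔ a = -b`. -/
structure PastureStr.IsPasture {P : Type u} (S : PastureStr P) : Prop where
  mul_comm : ∀ a b : P, S.mul a b = S.mul b a
  mul_assoc : ∀ a b c : P, S.mul (S.mul a b) c = S.mul a (S.mul b c)
  one_mul : ∀ a : P, S.mul S.one a = a
  zero_mul : ∀ a : P, S.mul S.zero a = S.zero
  one_ne_zero : S.one ≠ S.zero
  mul_ne_zero : ∀ a b : P, a ≠ S.zero → b ≠ S.zero → S.mul a b ≠ S.zero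
  exists_inv : ∀ a : P, a ≠ S.zero → ∃ b : P, S.mul a b = S.one
  neg_neg : ∀ a : P, S.neg (S.neg a) = a
  neg_zero : S.neg S.zero = S.zero
  null_swap_left : ∀ a b c : P, S.null a b c → S.null b a c
  null_swap_right : ∀ a b c : P, S.null a b c → S.null a c b
  null_mul : ∀ d a b c : P, S.null a b c → S.null (S.mul d a) (S.mul d b) (S.mul d c)
  null_zero : ∀ a b : P, S.null a b S.zero ↔ a = S.neg b

/-- A morphism of pastures: a multiplicative map preserving `0`, `1`,
the involution and the nullset. -/
structure PastureStr.IsHom {P : Type u} {P' : Type v} (S : PastureStr P) (T : PastureStr P')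
    (f : P → P') : Prop where
  map_mul : ∀ a b : P, f (S.mul a b) = T.mul (f a) (f b)
  map_zero : f S.zero = T.zero
  map_one : f S.one = T.one
  map_neg : ∀ a : P, f (S.neg a) = T.neg (f a)
  map_null : ∀ a b c : P, S.null a b c → T.null (f a) (f b) (f c)

/-- A bundled pasture: a carrier with a pasture structure satisfying the axioms. -/
structure Pasture : Type (u + 1) where
  carrier : Type u
  str : PastureStr carrier
  isPasture : str.IsPasture

/-- A morphism between bundled pastures. -/
structure PastureHom (A B : Pasture.{u}) : Type u where
  toFun : A.carrier → B.carrier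
  isHom : PastureStr.IsHom A.str B.str toFun

theorem PastureHom.ext' {A B : Pasture.{u}} {f g : PastureHom A B}
    (h : f.toFun = g.toFun) : f = g := by
  cases f; cases g; cases h; rfl

theorem PastureStr.IsHom.id' {P : Type u} (S : PastureStr P) :
    S.IsHom S (fun x => x) :=
  ⟨fun _ _ => rfl, rfl, rfl, fun _ => rfl, fun _ _ _ h => h⟩

theorem PastureStr.IsHom.comp' {P : Type u} {Q : Type v} {R : Type w}
    {S : PastureStr P} {T : PastureStr Q} {U : PastureStr R}
    {f : P → Q} {g : Q → R} (hf : S.IsHom T f) (hg : T.IsHom U g) :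
    S.IsHom U (fun x => g (f x)) where
  map_mul a b := by
    show g (f (S.mul a b)) = U.mul (g (f a)) (g (f b))
    rw [hf.map_mul, hg.map_mul]
  map_zero := by
    show g (f S.zero) = U.zero
    rw [hf.map_zero, hg.map_zero]
  map_one := by
    show g (f S.one) = U.one
    rw [hf.map_one, hg.map_one]
  map_neg a := by
    show g (f (S.neg a)) = U.neg (g (f a))
    rw [hf.map_neg, hg.map_neg]
  map_null a b c h := hg.map_null _ _ _ (hf.map_null _ _ _ h)

/-- The category of pastures, with morphisms of pastures as morphisms and
composition of functions as composition. -/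
instance : CategoryTheory.Category Pasture.{u} where
  Hom A B := PastureHom A B
  id A := ⟨fun x => x, PastureStr.IsHom.id' A.str⟩
  comp f g := ⟨fun x => g.toFun (f.toFun x), f.isHom.comp' g.isHom⟩
  id_comp _ := PastureHom.ext' rfl
  comp_id _ := PastureHom.ext' rfl
  assoc _ _ _ := PastureHom.ext' rfl

/-!
The Krasner hyperfield `𝕂 = {0, 1}` is the terminal pasture: a morphism into it must send
exactly `0` to `0`, since it maps units to units. A limit of `F` is therefore built inside
`𝕂 × ∏ j, F j` from the compatible families `(ε, (x j))` with `x j = 0 ↔ ε = 0`, all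
operations and the nullset taken componentwise. The condition makes a family with `ε ≠ 0`
invertible, and the flag `ε` is what keeps `1 ≠ 0` when `J` is empty. A cone lifts by
`a ↦ (toKrasner a, (π j a))`, and uniqueness of the flag component is terminality of `𝕂`.
-/

namespace PastureStr

variable {P : Type*} {S : PastureStr P}

namespace IsPasture

theorem mul_zero (hp : S.IsPasture) (a : P) : S.mul a S.zero = S.zero := by
  rw [hp.mul_comm, hp.zero_mul]

theorem mul_eq_zero_iff (hp : S.IsPasture) {a b : P} :
    S.mul a b = S.zero ↔ a = S.zero ∨ b = S.zero := by
  refine ⟨fun h => ?_, ?_⟩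
  · by_contra! hab
    exact hp.mul_ne_zero a b hab.1 hab.2 h
  · rintro (rfl | rfl)
    exacts [hp.zero_mul b, hp.mul_zero a]

theorem neg_eq_zero_iff (hp : S.IsPasture) {a : P} : S.neg a = S.zero ↔ a = S.zero :=
  ⟨fun h => by rw [← hp.neg_neg a, h, hp.neg_zero], fun h => by rw [h, hp.neg_zero]⟩

theorem inv_unique (hp : S.IsPasture) {a b c : P} (hb : S.mul a b = S.one)
    (hc : S.mul a c = S.one) : b = c := calc
  b = S.mul (S.mul a c) b := by rw [hc, hp.one_mul]
  _ = S.mul c (S.mul a b) := by rw [hp.mul_comm a c, hp.mul_assoc]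
  _ = c := by rw [hb, hp.mul_comm, hp.one_mul]

theorem ne_zero_or_ne_zero_of_null (hp : S.IsPasture) {a b c : P} (h : S.null a b c)
    (ha : a ≠ S.zero) : b ≠ S.zero ∨ c ≠ S.zero := by
  by_contra! hbc
  obtain ⟨rfl, rfl⟩ := hbc
  exact ha (((hp.null_zero a S.zero).1 h).trans hp.neg_zero)

end IsPasture

theorem IsHom.map_eq_zero_iff {Q : Type*} {T : PastureStr Q} {f : P → Q} (hf : S.IsHom T f)
    (hp : S.IsPasture) (hq : T.IsPasture) {a : P} : f a = T.zero ↔ a = S.zero := by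
  refine ⟨fun h => ?_, fun h => h ▸ hf.map_zero⟩
  by_contra ha
  obtain ⟨b, hb⟩ := hp.exists_inv a ha
  apply hq.one_ne_zero
  rw [← hf.map_one, ← hb, hf.map_mul, h, hq.zero_mul]

/-- The Krasner hyperfield, with `true` as `1`. Since `1 + 1 = {0, 1}`, a triple is null iff
no entry is its only nonzero entry. -/
def krasner : PastureStr Bool where
  mul := and
  zero := false
  one := true
  neg := id
  null a b c := (a → b ∨ c) ∧ (b → a ∨ c) ∧ (c → a ∨ b)

theorem krasner_isPasture : krasner.IsPasture := by
  constructor <;> simp only [krasner] <;> decide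

open Classical in
noncomputable def toKrasner (S : PastureStr P) (a : P) : Bool :=
  decide (a ≠ S.zero)

theorem toKrasner_eq_zero_iff {a : P} : toKrasner S a = krasner.zero ↔ a = S.zero := by
  simp [toKrasner, krasner]

theorem isHom_toKrasner (hp : S.IsPasture) : S.IsHom krasner (toKrasner S) where
  map_mul a b := by
    rw [Bool.eq_iff_iff]
    simp [toKrasner, krasner, hp.mul_eq_zero_iff]
  map_zero := toKrasner_eq_zero_iff.2 rfl
  map_one := by simp [toKrasner, krasner, hp.one_ne_zero]
  map_neg a := by simp [toKrasner, krasner, hp.neg_eq_zero_iff]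
  map_null a b c h := by
    simp only [toKrasner, krasner, decide_eq_true_eq]
    exact ⟨hp.ne_zero_or_ne_zero_of_null h,
      hp.ne_zero_or_ne_zero_of_null (hp.null_swap_left _ _ _ h),
      hp.ne_zero_or_ne_zero_of_null (hp.null_swap_left _ _ _ (hp.null_swap_right _ _ _ h))⟩

theorem IsHom.eq_toKrasner {f : P → Bool} (hf : S.IsHom krasner f) (hp : S.IsPasture) :
    f = toKrasner S := by
  funext a
  have h := (hf.map_eq_zero_iff hp krasner_isPasture (a := a)).trans toKrasner_eq_zero_iff.symm
  revert h
  cases f a <;> cases toKrasner S a <;> simp [krasner]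

end PastureStr

namespace Pasture

open CategoryTheory PastureStr

variable {J : Type v} [SmallCategory J] (F : J ⥤ Pasture.{max u v})

@[ext]
structure LimitCarrier where
  flag : Bool
  val : ∀ j, (F.obj j).carrier
  map_val : ∀ {j j'} (f : j ⟶ j'), (F.map f).toFun (val j) = val j'
  val_eq_zero_iff : ∀ j, val j = (F.obj j).str.zero ↔ flag = krasner.zero

def limitStr : PastureStr (LimitCarrier F) where
  mul x y :=
    { flag := krasner.mul x.flag y.flag
      val j := (F.obj j).str.mul (x.val j) (y.val j)
      map_val f := by rw [(F.map f).isHom.map_mul, x.map_val f, y.map_val f]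
      val_eq_zero_iff j := by
        rw [(F.obj j).isPasture.mul_eq_zero_iff, x.val_eq_zero_iff, y.val_eq_zero_iff,
          krasner_isPasture.mul_eq_zero_iff] }
  zero :=
    { flag := krasner.zero
      val j := (F.obj j).str.zero
      map_val f := (F.map f).isHom.map_zero
      val_eq_zero_iff _ := iff_of_true rfl rfl }
  one :=
    { flag := krasner.one
      val j := (F.obj j).str.one
      map_val f := (F.map f).isHom.map_one
      val_eq_zero_iff j := iff_of_false (F.obj j).isPasture.one_ne_zero
        krasner_isPasture.one_ne_zero }
  neg x :=
    { flag := krasner.neg x.flag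
      val j := (F.obj j).str.neg (x.val j)
      map_val f := by rw [(F.map f).isHom.map_neg, x.map_val f]
      val_eq_zero_iff j := by
        rw [(F.obj j).isPasture.neg_eq_zero_iff, x.val_eq_zero_iff,
          krasner_isPasture.neg_eq_zero_iff] }
  null x y z := krasner.null x.flag y.flag z.flag ∧
    ∀ j, (F.obj j).str.null (x.val j) (y.val j) (z.val j)

variable {F}

theorem LimitCarrier.eq_zero_iff {x : LimitCarrier F} :
    x = (limitStr F).zero ↔ x.flag = krasner.zero :=
  ⟨congrArg flag, fun h => LimitCarrier.ext h (funext fun j => (x.val_eq_zero_iff j).2 h)⟩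

theorem LimitCarrier.exists_mul_eq_one {x : LimitCarrier F} (hx : x.flag ≠ krasner.zero) :
    ∃ y, (limitStr F).mul x y = (limitStr F).one := by
  have hxj j : x.val j ≠ (F.obj j).str.zero := (x.val_eq_zero_iff j).not.2 hx
  choose y hy using fun j => (F.obj j).isPasture.exists_inv _ (hxj j)
  refine ⟨⟨krasner.one, y, fun {j j'} f => ?_, fun j => ?_⟩, ?_⟩
  · refine (F.obj j').isPasture.inv_unique ?_ (hy j')
    rw [← x.map_val f, ← (F.map f).isHom.map_mul, hy j, (F.map f).isHom.map_one]
  · refine iff_of_false (fun h => (F.obj j).isPasture.one_ne_zero ?_) krasner_isPasture.one_ne_zero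
    rw [← hy j, h, (F.obj j).isPasture.mul_zero]
  · exact LimitCarrier.ext (by simpa [limitStr, krasner] using hx) (funext hy)

variable (F)

theorem limitStr_isPasture : (limitStr F).IsPasture where
  mul_comm x y := LimitCarrier.ext (krasner_isPasture.mul_comm _ _)
    (funext fun j => (F.obj j).isPasture.mul_comm _ _)
  mul_assoc x y z := LimitCarrier.ext (krasner_isPasture.mul_assoc _ _ _)
    (funext fun j => (F.obj j).isPasture.mul_assoc _ _ _)
  one_mul x := LimitCarrier.ext (krasner_isPasture.one_mul _)
    (funext fun j => (F.obj j).isPasture.one_mul _)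
  zero_mul x := LimitCarrier.ext (krasner_isPasture.zero_mul x.flag)
    (funext fun j => (F.obj j).isPasture.zero_mul _)
  one_ne_zero h := krasner_isPasture.one_ne_zero (congrArg LimitCarrier.flag h)
  mul_ne_zero x y hx hy h := krasner_isPasture.mul_ne_zero _ _
    (LimitCarrier.eq_zero_iff.not.1 hx)
    (LimitCarrier.eq_zero_iff.not.1 hy) (congrArg LimitCarrier.flag h)
  exists_inv x hx := LimitCarrier.exists_mul_eq_one (LimitCarrier.eq_zero_iff.not.1 hx)
  neg_neg x := LimitCarrier.ext (krasner_isPasture.neg_neg _)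
    (funext fun j => (F.obj j).isPasture.neg_neg _)
  neg_zero := LimitCarrier.ext krasner_isPasture.neg_zero
    (funext fun j => (F.obj j).isPasture.neg_zero)
  null_swap_left x y z h := ⟨krasner_isPasture.null_swap_left _ _ _ h.1,
    fun j => (F.obj j).isPasture.null_swap_left _ _ _ (h.2 j)⟩
  null_swap_right x y z h := ⟨krasner_isPasture.null_swap_right _ _ _ h.1,
    fun j => (F.obj j).isPasture.null_swap_right _ _ _ (h.2 j)⟩
  null_mul d x y z h := ⟨krasner_isPasture.null_mul _ _ _ _ h.1,
    fun j => (F.obj j).isPasture.null_mul _ _ _ _ (h.2 j)⟩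
  null_zero x y := by
    refine ⟨fun h => LimitCarrier.ext ((krasner_isPasture.null_zero _ _).1 h.1)
      (funext fun j => ((F.obj j).isPasture.null_zero _ _).1 (h.2 j)), ?_⟩
    rintro rfl
    exact ⟨(krasner_isPasture.null_zero _ _).2 rfl,
      fun j => ((F.obj j).isPasture.null_zero _ _).2 rfl⟩

def limitPasture : Pasture.{max u v} := ⟨LimitCarrier F, limitStr F, limitStr_isPasture F⟩

theorem isHom_flag : (limitStr F).IsHom krasner LimitCarrier.flag :=
  ⟨fun _ _ => rfl, rfl, rfl, fun _ => rfl, fun _ _ _ h => h.1⟩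

theorem isHom_val (j : J) : (limitStr F).IsHom (F.obj j).str fun x => x.val j :=
  ⟨fun _ _ => rfl, rfl, rfl, fun _ => rfl, fun _ _ _ h => h.2 j⟩

theorem isHom_of_isHom_flag_of_isHom_val {Q : Type*} {T : PastureStr Q} {g : Q → LimitCarrier F}
    (hflag : T.IsHom krasner fun a => (g a).flag)
    (hval : ∀ j, T.IsHom (F.obj j).str fun a => (g a).val j) : T.IsHom (limitStr F) g where
  map_mul a b := LimitCarrier.ext (hflag.map_mul a b) (funext fun j => (hval j).map_mul a b)
  map_zero := LimitCarrier.ext hflag.map_zero (funext fun j => (hval j).map_zero)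
  map_one := LimitCarrier.ext hflag.map_one (funext fun j => (hval j).map_one)
  map_neg a := LimitCarrier.ext (hflag.map_neg a) (funext fun j => (hval j).map_neg a)
  map_null a b c h := ⟨hflag.map_null a b c h, fun j => (hval j).map_null a b c h⟩

def limitCone : Limits.Cone F where
  pt := limitPasture F
  π :=
    { app j := ⟨fun x => x.val j, isHom_val F j⟩
      naturality _ _ f := PastureHom.ext' (funext fun x => (x.map_val f).symm) }

noncomputable def limitConeLift (c : Limits.Cone F) : c.pt ⟶ limitPasture F where
  toFun a :=
    { flag := toKrasner c.pt.str a
      val j := (c.π.app j).toFun a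
      map_val f := congrFun (congrArg PastureHom.toFun (c.w f)) a
      val_eq_zero_iff j :=
        ((c.π.app j).isHom.map_eq_zero_iff c.pt.isPasture (F.obj j).isPasture).trans
          toKrasner_eq_zero_iff.symm }
  isHom := isHom_of_isHom_flag_of_isHom_val F (isHom_toKrasner c.pt.isPasture)
    fun j => (c.π.app j).isHom

noncomputable def limitConeIsLimit : Limits.IsLimit (limitCone F) where
  lift := limitConeLift F
  fac _ _ := PastureHom.ext' rfl
  uniq c m hm := PastureHom.ext' <| funext fun a => LimitCarrier.ext
    (congrFun ((m.isHom.comp' (isHom_flag F)).eq_toKrasner c.pt.isPasture) a)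
    (funext fun j => congrFun (congrArg PastureHom.toFun (hm j)) a)

end Pasture

/-- **The category of pastures has all small limits**: every functor from a
small category `J` into the category of pastures has a limit. -/
theorem pastures_have_small_limits (J : Type v) [CategoryTheory.SmallCategory J]
    (F : CategoryTheory.Functor J Pasture.{max u v}) :
    CategoryTheory.Limits.HasLimit F :=
  CategoryTheory.Limits.HasLimit.mk ⟨Pasture.limitCone F, Pasture.limitConeIsLimit F⟩
end

section
/- The category of pastures has arbitrary coproducts: for any index set I and any family of pastures (P_i)_{i ∈ I}, there exists a pasture Q together with morphisms of pastures i_j : P_j → Q for each j ∈ I, such that for every pasture P' with morphisms f_i : P_i → P' for each i ∈ I there is a unique morphism of pastures g : Q → P' with g ∘ i_j = f_j for all j ∈ I. -/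
/-!
The coproduct `Q` is written down explicitly. Its nonzero elements form the coproduct of the
abelian groups `(P i)ˣ` in which every `-1 ∈ P i` is identified with one sign `-1 ∈ ℤˣ`
(adjoined separately so that the empty family is covered); adjoining `0` makes `Q` a commutative
group with zero, and negation is multiplication by the sign. The nullset of `Q` consists of the
trivial triples `(x, -x, 0)` up to order and the multiples `d · (a, b, c)` of images of null triples
of a single `P i`; this set is already closed under permutation and scaling, and a triple in it
with a zero entry is trivial because `Q` has no zero divisors. Morphisms `f i : P i → P'` induce a
homomorphism of unit groups by the universal properties of free products, abelianizations and
quotients, extended by `0 ↦ 0`; it is unique since `Q` is generated by `0`, the sign and the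
images of the `P i`.
-/

universe u v w

section UnitsInt
variable {M : Type*} [Monoid M]

def unitsIntHom (κ : M) (hκ : κ * κ = 1) : ℤˣ →* M where
  toFun s := if s = 1 then 1 else κ
  map_one' := if_pos rfl
  map_mul' a b := by
    rcases Int.units_eq_one_or a with rfl | rfl <;> rcases Int.units_eq_one_or b with rfl | rfl <;>
      simp [hκ]

theorem unitsIntHom_neg_one (κ : M) (hκ : κ * κ = 1) : unitsIntHom κ hκ (-1) = κ := by
  simp [unitsIntHom]

theorem MonoidHom.ext_unitsInt {f g : ℤˣ →* M} (h : f (-1) = g (-1)) : f = g := by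
  ext s
  rcases Int.units_eq_one_or s with rfl | rfl
  · simp
  · exact h

end UnitsInt

section SignCoprod

open Monoid Monoid.Coprod

variable {I : Type*} {G : I → Type*} [∀ i, CommGroup (G i)] (ε : ∀ i, G i)

def SignCoprod.relators : Set (Abelianization (ℤˣ ∗ CoprodI G)) :=
  Set.range fun i => .of (Coprod.inr (CoprodI.of (ε i))) / .of (Coprod.inl (-1))

/-- The coproduct of the commutative groups `G i` with every `ε i` identified with `-1 ∈ ℤˣ`. -/
abbrev SignCoprod : Type _ :=
  Abelianization (ℤˣ ∗ CoprodI G) ⧸ Subgroup.closure (SignCoprod.relators ε)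

namespace SignCoprod

def sign : SignCoprod ε := QuotientGroup.mk (.of (Coprod.inl (-1)))

def of (i : I) : G i →* SignCoprod ε :=
  (QuotientGroup.mk' _).comp (Abelianization.of.comp (Coprod.inr.comp CoprodI.of))

theorem of_apply_self (i : I) : of ε i (ε i) = sign ε :=
  (QuotientGroup.eq_iff_div_mem).2 (Subgroup.subset_closure ⟨i, rfl⟩)

theorem sign_mul_sign : sign ε * sign ε = 1 := by
  rw [sign, ← QuotientGroup.mk_mul, ← map_mul, ← map_mul, neg_one_mul, neg_neg, map_one, map_one,
    QuotientGroup.mk_one]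

variable {ε} {K : Type*} [CommGroup K] (φ : ∀ i, G i →* K) (κ : K) (hκ : κ * κ = 1)
  (hφ : ∀ i, φ i (ε i) = κ)

def lift : SignCoprod ε →* K :=
  QuotientGroup.lift _ (Abelianization.lift (Coprod.lift (unitsIntHom κ hκ) (CoprodI.lift φ))) <| by
    rw [Subgroup.closure_le]
    rintro _ ⟨i, rfl⟩
    simp [hφ, unitsIntHom_neg_one]

theorem lift_of (i : I) (g : G i) : lift φ κ hκ hφ (of ε i g) = φ i g := by
  simp [lift, of]

theorem lift_sign : lift φ κ hκ hφ (sign ε) = κ := by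
  simp [lift, sign, unitsIntHom_neg_one]

theorem hom_ext {M : Type*} [Monoid M] {f g : SignCoprod ε →* M} (hsign : f (sign ε) = g (sign ε))
    (hof : ∀ i, f.comp (of ε i) = g.comp (of ε i)) : f = g :=
  QuotientGroup.monoidHom_ext _ <| Abelianization.hom_ext _ _ <|
    Coprod.hom_ext (MonoidHom.ext_unitsInt hsign) (CoprodI.ext_hom _ _ hof)

end SignCoprod

end SignCoprod

namespace PastureStr

section Carrier

variable {P : Type*}

/-- The type `P`, which carries the commutative group with zero (and the negation) of a pasture
structure `S` on `P` once `Fact S.IsPasture` is available. -/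
def Carrier (_ : PastureStr P) : Type _ := P

variable {S : PastureStr P} [hS : Fact S.IsPasture]

noncomputable instance : CommGroupWithZero S.Carrier := by
  classical exact
  { mul := S.mul
    one := S.one
    zero := S.zero
    inv := fun a => if ha : a = S.zero then S.zero else Classical.choose (hS.out.exists_inv a ha)
    mul_assoc := hS.out.mul_assoc
    one_mul := hS.out.one_mul
    mul_one := fun a => (hS.out.mul_comm _ _).trans (hS.out.one_mul a)
    mul_comm := hS.out.mul_comm
    zero_mul := hS.out.zero_mul
    mul_zero := fun a => (hS.out.mul_comm _ _).trans (hS.out.zero_mul a)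
    exists_pair_ne := ⟨S.one, S.zero, hS.out.one_ne_zero⟩
    inv_zero := dif_pos rfl
    mul_inv_cancel := fun a ha =>
      (congrArg (S.mul a) (dif_neg ha)).trans (Classical.choose_spec (hS.out.exists_inv a ha)) }

theorem neg_eq_mul_neg_one (a : P) : S.neg a = S.mul a (S.neg S.one) := by
  -- scale the null triple `(1, -1, 0)` by `a`
  have h := hS.out.null_mul a _ _ _
    ((hS.out.null_zero S.one (S.neg S.one)).2 (hS.out.neg_neg _).symm)
  rw [show S.mul a S.one = a from mul_one (M := S.Carrier) a,
    show S.mul a S.zero = S.zero from mul_zero (M₀ := S.Carrier) a, hS.out.null_zero] at h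
  nth_rw 1 [h]
  exact hS.out.neg_neg _

instance : HasDistribNeg S.Carrier where
  neg := S.neg
  neg_neg := hS.out.neg_neg
  neg_mul a b := by
    change S.mul (S.neg a) b = S.neg (S.mul a b)
    rw [neg_eq_mul_neg_one (S := S) a, neg_eq_mul_neg_one (S := S) (S.mul a b)]
    exact mul_right_comm (G := S.Carrier) a _ b
  mul_neg a b := by
    change S.mul a (S.neg b) = S.neg (S.mul a b)
    rw [neg_eq_mul_neg_one (S := S) b, neg_eq_mul_neg_one (S := S) (S.mul a b)]
    exact (mul_assoc (G := S.Carrier) a b _).symm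

variable {P' : Type*} {S' : PastureStr P'} [Fact S'.IsPasture] {f : P → P'}

def IsHom.toMonoidWithZeroHom (hf : S.IsHom S' f) : S.Carrier →*₀ S'.Carrier where
  toFun := f
  map_zero' := hf.map_zero
  map_one' := hf.map_one
  map_mul' := hf.map_mul

end Carrier

theorem IsHom.map_neg_one {P P' : Type*} {S : PastureStr P} {S' : PastureStr P'} {f : P → P'}
    (hf : S.IsHom S' f) : f (S.neg S.one) = S'.neg S'.one := by
  rw [hf.map_neg, hf.map_one]

def ofCommGroupWithZero {Q : Type*} [CommGroupWithZero Q] (ν : Q) (null : Q → Q → Q → Prop) :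
    PastureStr Q where
  mul := (· * ·)
  zero := 0
  one := 1
  neg := (ν * ·)
  null := null

theorem isPasture_ofCommGroupWithZero {Q : Type*} [CommGroupWithZero Q] {ν : Q} (hν : ν * ν = 1)
    {null : Q → Q → Q → Prop} (null_swap_left : ∀ a b c, null a b c → null b a c)
    (null_swap_right : ∀ a b c, null a b c → null a c b)
    (null_mul : ∀ d a b c, null a b c → null (d * a) (d * b) (d * c))
    (null_zero : ∀ a b, null a b 0 ↔ a = ν * b) :
    (ofCommGroupWithZero ν null).IsPasture where
  mul_comm := mul_comm
  mul_assoc := mul_assoc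
  one_mul := one_mul
  zero_mul := zero_mul
  one_ne_zero := one_ne_zero
  mul_ne_zero _ _ := mul_ne_zero
  exists_inv a ha := ⟨a⁻¹, mul_inv_cancel₀ ha⟩
  neg_neg a := by
    change ν * (ν * a) = a
    rw [← mul_assoc, hν, one_mul]
  neg_zero := mul_zero ν
  null_swap_left := null_swap_left
  null_swap_right := null_swap_right
  null_mul := null_mul
  null_zero := null_zero

end PastureStr

open PastureStr

section PastureCoprod

variable {I : Type*} {P : I → Type*} (S : ∀ i, PastureStr (P i)) [hS : ∀ i, Fact (S i).IsPasture]

abbrev PastureCoprodUnits : Type _ := SignCoprod fun i => (-1 : (S i).Carrierˣ)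

abbrev PastureCoprod : Type _ := WithZero (PastureCoprodUnits S)

namespace PastureCoprod

noncomputable def negOne : PastureCoprod S := (SignCoprod.sign _ : PastureCoprodUnits S)

theorem negOne_mul_negOne : negOne S * negOne S = 1 := by
  rw [negOne, ← WithZero.coe_mul, SignCoprod.sign_mul_sign, WithZero.coe_one]

open Classical in
noncomputable def of (j : I) : (S j).Carrier →*₀ PastureCoprod S :=
  (WithZero.map' (SignCoprod.of _ j)).comp
    WithZero.withZeroUnitsEquiv.symm.toMonoidWithZeroHom

theorem of_coe (j : I) (u : (S j).Carrierˣ) :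
    of S j u = (SignCoprod.of _ j u : PastureCoprodUnits S) := by
  simp [of]

theorem of_neg (j : I) (a : (S j).Carrier) : of S j (-a) = negOne S * of S j a := by
  rw [← neg_one_mul, map_mul, ← Units.val_one, ← Units.val_neg, of_coe, SignCoprod.of_apply_self]
  rfl

def Null (x y z : PastureCoprod S) : Prop :=
  (z = 0 ∧ x = negOne S * y) ∨ (y = 0 ∧ x = negOne S * z) ∨ (x = 0 ∧ y = negOne S * z) ∨
    ∃ (j : I) (a b c : (S j).Carrier) (d : PastureCoprod S), (S j).null a b c ∧
      x = d * of S j a ∧ y = d * of S j b ∧ z = d * of S j c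

variable {S}

theorem Null.swap_left {x y z : PastureCoprod S} : Null S x y z → Null S y x z := by
  rintro (⟨rfl, rfl⟩ | ⟨rfl, rfl⟩ | ⟨rfl, rfl⟩ | ⟨j, a, b, c, d, h, rfl, rfl, rfl⟩)
  · exact Or.inl ⟨rfl, by rw [← mul_assoc, negOne_mul_negOne, one_mul]⟩
  · exact Or.inr <| Or.inr <| Or.inl ⟨rfl, rfl⟩
  · exact Or.inr <| Or.inl ⟨rfl, rfl⟩
  · exact Or.inr <| Or.inr <| Or.inr
      ⟨j, b, a, c, d, (hS j).out.null_swap_left _ _ _ h, rfl, rfl, rfl⟩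

theorem Null.swap_right {x y z : PastureCoprod S} : Null S x y z → Null S x z y := by
  rintro (⟨rfl, rfl⟩ | ⟨rfl, rfl⟩ | ⟨rfl, rfl⟩ | ⟨j, a, b, c, d, h, rfl, rfl, rfl⟩)
  · exact Or.inr <| Or.inl ⟨rfl, rfl⟩
  · exact Or.inl ⟨rfl, rfl⟩
  · exact Or.inr <| Or.inr <| Or.inl ⟨rfl, by rw [← mul_assoc, negOne_mul_negOne, one_mul]⟩
  · exact Or.inr <| Or.inr <| Or.inr
      ⟨j, a, c, b, d, (hS j).out.null_swap_right _ _ _ h, rfl, rfl, rfl⟩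

theorem Null.mul_left (e : PastureCoprod S) {x y z : PastureCoprod S} :
    Null S x y z → Null S (e * x) (e * y) (e * z) := by
  rintro (⟨rfl, rfl⟩ | ⟨rfl, rfl⟩ | ⟨rfl, rfl⟩ | ⟨j, a, b, c, d, h, rfl, rfl, rfl⟩)
  · exact Or.inl ⟨mul_zero e, mul_left_comm _ _ _⟩
  · exact Or.inr <| Or.inl ⟨mul_zero e, mul_left_comm _ _ _⟩
  · exact Or.inr <| Or.inr <| Or.inl ⟨mul_zero e, mul_left_comm _ _ _⟩
  · exact Or.inr <| Or.inr <| Or.inr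
      ⟨j, a, b, c, e * d, h, (mul_assoc ..).symm, (mul_assoc ..).symm, (mul_assoc ..).symm⟩

theorem null_zero_iff {x y : PastureCoprod S} : Null S x y 0 ↔ x = negOne S * y := by
  refine ⟨?_, fun h => Or.inl ⟨rfl, h⟩⟩
  rintro (⟨-, h⟩ | ⟨rfl, rfl⟩ | ⟨rfl, rfl⟩ | ⟨j, a, b, c, d, h, rfl, rfl, hc⟩)
  · exact h
  · rfl
  · simp
  · obtain rfl | hc := mul_eq_zero.1 hc.symm
    · simp
    · rw [map_eq_zero] at hc
      subst hc
      rw [show a = -b from ((hS j).out.null_zero a b).1 h, of_neg, mul_left_comm]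

variable (S)

noncomputable def pastureStr : PastureStr (PastureCoprod S) :=
  ofCommGroupWithZero (negOne S) (Null S)

theorem isPasture_pastureStr : (pastureStr S).IsPasture :=
  isPasture_ofCommGroupWithZero (negOne_mul_negOne S) (fun _ _ _ => Null.swap_left)
    (fun _ _ _ => Null.swap_right) (fun e _ _ _ => Null.mul_left e) fun _ _ => null_zero_iff

theorem isHom_of (j : I) : (S j).IsHom (pastureStr S) (of S j) where
  map_mul := map_mul (of S j)
  map_zero := map_zero (of S j)
  map_one := map_one (of S j)
  map_neg := of_neg S j
  map_null a b c h := Or.inr <| Or.inr <| Or.inr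
    ⟨j, a, b, c, 1, h, (one_mul _).symm, (one_mul _).symm, (one_mul _).symm⟩

variable {S} {P' : Type*} {S' : PastureStr P'} [hS' : Fact S'.IsPasture] {f : ∀ i, P i → P'}
  (hf : ∀ i, (S i).IsHom S' (f i))

noncomputable def lift : PastureCoprod S →*₀ S'.Carrier :=
  WithZero.lift' <| (Units.coeHom S'.Carrier).comp <|
    SignCoprod.lift (fun i => Units.map (hf i).toMonoidWithZeroHom.toMonoidHom) (-1) (by simp)
      fun i => Units.ext (hf i).map_neg_one

theorem lift_of (j : I) (a : (S j).Carrier) : lift hf (of S j a) = f j a := by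
  obtain rfl | ha := eq_or_ne a 0
  · rw [map_zero, map_zero]
    exact (hf j).map_zero.symm
  · lift a to (S j).Carrierˣ using ha.isUnit
    rw [of_coe, lift, WithZero.lift'_coe, MonoidHom.comp_apply, SignCoprod.lift_of]
    rfl

theorem lift_negOne : lift hf (negOne S) = -1 := by
  simp [lift, negOne, SignCoprod.lift_sign]

theorem isHom_lift : (pastureStr S).IsHom S' (lift hf) where
  map_mul := map_mul (lift hf)
  map_zero := map_zero (lift hf)
  map_one := map_one (lift hf)
  map_neg x := by
    change lift hf (negOne S * x) = -lift hf x
    rw [map_mul, lift_negOne, neg_one_mul]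
  map_null x y z := by
    rintro (⟨rfl, rfl⟩ | ⟨rfl, rfl⟩ | ⟨rfl, rfl⟩ | ⟨j, a, b, c, d, h, rfl, rfl, rfl⟩)
    all_goals simp only [map_mul, map_zero, lift_negOne, neg_one_mul, lift_of]
    · exact (hS'.out.null_zero _ _).2 rfl
    · exact hS'.out.null_swap_right _ _ _ ((hS'.out.null_zero _ _).2 rfl)
    · exact hS'.out.null_swap_left _ _ _ <|
        hS'.out.null_swap_right _ _ _ ((hS'.out.null_zero _ _).2 rfl)
    · exact hS'.out.null_mul _ _ _ _ ((hf j).map_null _ _ _ h)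

theorem hom_ext {g₁ g₂ : PastureCoprod S → P'} (h₁ : (pastureStr S).IsHom S' g₁)
    (h₂ : (pastureStr S).IsHom S' g₂) (h : ∀ j a, g₁ (of S j a) = g₂ (of S j a)) : g₁ = g₂ := by
  let φ (g : PastureCoprod S → P') (hg : (pastureStr S).IsHom S' g) :
      PastureCoprodUnits S →* S'.Carrier :=
    { toFun := fun x => g x, map_one' := hg.map_one, map_mul' := fun x y => hg.map_mul x y }
  have hφ : φ g₁ h₁ = φ g₂ h₂ := by
    refine SignCoprod.hom_ext ?_ fun j => MonoidHom.ext fun u => ?_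
    · change g₁ (negOne S) = g₂ (negOne S)
      rw [← mul_one (negOne S)]
      exact h₁.map_neg_one.trans h₂.map_neg_one.symm
    · change g₁ (SignCoprod.of _ j u : PastureCoprodUnits S) =
        g₂ (SignCoprod.of _ j u : PastureCoprodUnits S)
      rw [← of_coe]
      exact h j u
  funext x
  induction x using WithZero.recZeroCoe with
  | zero => exact h₁.map_zero.trans h₂.map_zero.symm
  | coe x => exact DFunLike.congr_fun hφ x

end PastureCoprod

end PastureCoprod

/-- **The category of pastures has arbitrary (set-indexed) coproducts.**
For any index set `I` and family of pastures `(P i)_{i ∈ I}` there is a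
pasture `Q` with morphisms `inc j : P j → Q` such that for every pasture `P'`
with morphisms `f i : P i → P'` there is a unique morphism `g : Q → P'`
with `g ∘ inc j = f j` for all `j`. -/
theorem pastures_have_coproducts
    {I : Type v} (P : I → Type u) (S : ∀ i, PastureStr (P i))
    (hS : ∀ i, (S i).IsPasture) :
    ∃ (Q : Type (max u v)) (SQ : PastureStr Q), SQ.IsPasture ∧
      ∃ inc : ∀ j, P j → Q, (∀ j, PastureStr.IsHom (S j) SQ (inc j)) ∧
        ∀ (P' : Type w) (S' : PastureStr P'), S'.IsPasture →
          ∀ f : ∀ i, P i → P', (∀ i, PastureStr.IsHom (S i) S' (f i)) →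
            ∃! g : Q → P', PastureStr.IsHom SQ S' g ∧ ∀ j, g ∘ inc j = f j := by
  have := fun i => Fact.mk (hS i)
  refine ⟨PastureCoprod S, PastureCoprod.pastureStr S, PastureCoprod.isPasture_pastureStr S,
    fun j => PastureCoprod.of S j, PastureCoprod.isHom_of S, ?_⟩
  intro P' S' hS' f hf
  have := Fact.mk hS'
  refine ⟨PastureCoprod.lift hf, ⟨PastureCoprod.isHom_lift hf,
    fun j => funext (PastureCoprod.lift_of hf j)⟩, ?_⟩
  rintro g ⟨hg, hgf⟩
  exact PastureCoprod.hom_ext hg (PastureCoprod.isHom_lift hf) fun j a =>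
    (congrFun (hgf j) a).trans (PastureCoprod.lift_of hf j a).symm
end
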